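/- arXiv:1404.2464 — 3 statements merged into one kernel-verified Lean document; each statement's English description precedes it below -/
import Mathlib

section
/- Consider the Copeland reduction election built from a graph G = (V, E) with |V| = n: candidates are E ∪ {p, a_1, a_2, b_1, b_2, b_3} with the party preferences as constructed (two special vertex-parties for v', v'', n−2 ordinary vertex-parties, one party P, and two parties P_1, P_2 of (n−2)/2 voters each). Then in the initial profile the Copeland^α scores satisfy s(p) = |E| + 4, s(a_1) = |E| + 2, s(a_2) = |E|, s(b_i) = 5 − i for i = 1,2,3, and s(e_i) = |E| − i + 3; hence p is the unique Copeland^α winner. -/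
namespace Stmt14

/-- Candidates: one per edge (`Sum.inl`) plus `p, a₁, a₂, b₁, b₂, b₃`. -/
abbrev Cand (m : ℕ) := Fin m ⊕ Fin 6

def pC (m : ℕ) : Cand m := Sum.inr 0
def a1 (m : ℕ) : Cand m := Sum.inr 1
def a2 (m : ℕ) : Cand m := Sum.inr 2
def b1 (m : ℕ) : Cand m := Sum.inr 3
def b2 (m : ℕ) : Cand m := Sum.inr 4
def b3 (m : ℕ) : Cand m := Sum.inr 5

/-- The edge-candidates incident to `v`, ordered by index. -/
def edgesInc (m n : ℕ) (inc : Fin m → Fin n → Bool) (v : Fin n) : List (Cand m) :=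
  ((List.finRange m).filter (fun e => inc e v)).map Sum.inl

/-- The edge-candidates not incident to `v`, ordered by index. -/
def edgesNot (m n : ℕ) (inc : Fin m → Fin n → Bool) (v : Fin n) : List (Cand m) :=
  ((List.finRange m).filter (fun e => !(inc e v))).map Sum.inl

/-- All edge-candidates `E*`, ordered by index. -/
def allEdges (m : ℕ) : List (Cand m) := (List.finRange m).map Sum.inl

/-- `E(v) ≻ A ≻ p ≻ B ≻ E* \ E(v)` (for the two special degree-1 vertices). -/
def specialPref (m n : ℕ) (inc : Fin m → Fin n → Bool) (v : Fin n) : List (Cand m) :=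
  edgesInc m n inc v ++ [a1 m, a2 m, pC m, b1 m, b2 m, b3 m] ++ edgesNot m n inc v

/-- `E(v) ≻ p ≻ B ≻ A ≻ E* \ E(v)` (for all other vertices). -/
def ordinaryPref (m n : ℕ) (inc : Fin m → Fin n → Bool) (v : Fin n) : List (Cand m) :=
  edgesInc m n inc v ++ [pC m, b1 m, b2 m, b3 m, a1 m, a2 m] ++ edgesNot m n inc v

/-- `B ≻ E* ≻ p ≻ A` (the party `P`). -/
def partyP (m : ℕ) : List (Cand m) :=
  [b1 m, b2 m, b3 m] ++ allEdges m ++ [pC m, a1 m, a2 m]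

/-- `a₁ ≻ p ≻ a₂ ≻ E* ≻ B` (the party `P₁`). -/
def partyP1 (m : ℕ) : List (Cand m) :=
  [a1 m, pC m, a2 m] ++ allEdges m ++ [b1 m, b2 m, b3 m]

/-- `E* ≻ B ≻ a₁ ≻ p ≻ a₂` (the party `P₂`). -/
def partyP2 (m : ℕ) : List (Cand m) :=
  allEdges m ++ [b1 m, b2 m, b3 m, a1 m, pC m, a2 m]

/-- The whole profile as a weighted list of preference orders: two special
vertex-parties for `v'` and `v''`, the `n − 2` ordinary vertex-parties, the
party `P`, and the parties `P₁, P₂` of `(n−2)/2` voters each. -/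
def profile (m n : ℕ) (inc : Fin m → Fin n → Bool) (v' v'' : Fin n) :
    List (ℕ × List (Cand m)) :=
  [(1, specialPref m n inc v'), (1, specialPref m n inc v'')]
    ++ (((List.finRange n).filter (fun v => decide (v ≠ v' ∧ v ≠ v''))).map
          (fun v => (1, ordinaryPref m n inc v)))
    ++ [(1, partyP m), ((n - 2) / 2, partyP1 m), ((n - 2) / 2, partyP2 m)]

/-- `N(c,d)`: the (weighted) number of voters preferring `c` to `d`. -/
def pairN {C : Type*} [DecidableEq C] (prof : List (ℕ × List C)) (c d : C) : ℕ :=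
  (prof.map (fun wl => if wl.2.idxOf c < wl.2.idxOf d then wl.1 else 0)).sum

/-- The Copeland^α score: `|B(c)| + α · |T(c)|`. -/
def copeland {C : Type*} [Fintype C] [DecidableEq C]
    (prof : List (ℕ × List C)) (α : ℚ) (c : C) : ℚ :=
  ((Finset.univ.filter (fun d => d ≠ c ∧ pairN prof c d > pairN prof d c)).card : ℚ) +
    α * ((Finset.univ.filter (fun d => d ≠ c ∧ pairN prof c d = pairN prof d c)).card : ℚ)

/-! The profile has `2 + (n - 2) + 1 + 2 · (n - 2) / 2 = 2n - 1` voters, an odd number, and every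
ballot ranks every candidate, so there are no ties and `c` beats `d` exactly when at least `n`
voters prefer `c` to `d`. Each such majority is collected from a few voter
groups: since every edge has exactly two endpoints, an edge is ranked above all non-edge candidates
by exactly two vertex voters and below them by the other `n - 2`; adding the `(n - 2) / 2` voters of
`P₁` and/or `P₂` reaches `n` because `n ≥ 6`. The resulting majority tournament is explicit, and the
Copeland scores are its out-degrees. -/

open Finset

section Ballots

variable {α : Type*} [DecidableEq α] {l l₁ l₂ : List α} {c d : α}

def Prefers (l : List α) (c d : α) : Prop := l.idxOf c < l.idxOf d

instance (l : List α) : DecidableRel (Prefers l) := fun _ _ => Nat.decLt _ _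

theorem Prefers.mem_left (h : Prefers l c d) : c ∈ l :=
  List.idxOf_lt_length_iff.1 (h.trans_le List.idxOf_le_length)

theorem Prefers.asymm (h : Prefers l c d) : ¬ Prefers l d c := lt_asymm h

theorem prefers_or_prefers (hc : c ∈ l) (hcd : c ≠ d) :
    Prefers l c d ∨ Prefers l d c :=
  lt_or_gt_of_ne fun h => hcd ((List.idxOf_inj hc).1 h)

theorem prefers_append_of_mem_of_notMem (hc : c ∈ l₁) (hd : d ∉ l₁) :
    Prefers (l₁ ++ l₂) c d := by
  unfold Prefers
  rw [List.idxOf_append_of_mem hc, List.idxOf_append_of_notMem hd]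
  exact (List.idxOf_lt_length_iff.2 hc).trans_le (Nat.le_add_right _ _)

theorem Prefers.append_right (h : Prefers l₁ c d) : Prefers (l₁ ++ l₂) c d := by
  by_cases hd : d ∈ l₁
  · unfold Prefers at h ⊢
    rwa [List.idxOf_append_of_mem (Prefers.mem_left h), List.idxOf_append_of_mem hd]
  · exact prefers_append_of_mem_of_notMem h.mem_left hd

theorem Prefers.append_left (hc : c ∉ l₁) (hd : d ∉ l₁) (h : Prefers l₂ c d) :
    Prefers (l₁ ++ l₂) c d := by
  unfold Prefers at h ⊢
  rw [List.idxOf_append_of_notMem hc, List.idxOf_append_of_notMem hd]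
  omega

theorem Prefers.map {β : Type*} [DecidableEq β] {f : α → β} (hf : Function.Injective f)
    (h : Prefers l c d) : Prefers (l.map f) (f c) (f d) := by
  have key : ∀ a, (l.map f).idxOf (f a) = l.idxOf a := fun a => by
    simp [List.idxOf, List.findIdx_map, Function.comp_def, beq_eq_decide, hf.eq_iff]
  unfold Prefers at h ⊢
  rwa [key, key]

theorem prefers_of_pairwise_lt [Preorder α] (hl : l.Pairwise (· < ·)) (hc : c ∈ l) (hd : d ∈ l)
    (hcd : c < d) : Prefers l c d := by
  induction l with
  | nil => simp at hc
  | cons x t ih =>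
    obtain ⟨hx, ht⟩ := List.pairwise_cons.1 hl
    unfold Prefers
    by_cases hxc : x = c
    · subst hxc
      rw [List.idxOf_cons_self, List.idxOf_cons_ne _ (ne_of_lt hcd)]
      exact Nat.succ_pos _
    · have hc' : c ∈ t := (List.mem_cons.1 hc).resolve_left (Ne.symm hxc)
      have hxd : x ≠ d := by rintro rfl; exact lt_asymm hcd (hx c hc')
      have hd' : d ∈ t := (List.mem_cons.1 hd).resolve_left (Ne.symm hxd)
      rw [List.idxOf_cons_ne _ hxc, List.idxOf_cons_ne _ hxd]
      exact Nat.succ_lt_succ (ih ht hc' hd')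

end Ballots

section Tally

theorem ite_zero_le_ite_zero {p q : Prop} [Decidable p] [Decidable q] (a : ℕ) (h : p → q) :
    (if p then a else 0) ≤ if q then a else 0 := by
  by_cases hp : p
  · simp [hp, h hp]
  · simp [hp]

variable {C : Type*} [DecidableEq C] {prof : List (ℕ × List C)} {c d : C}

@[simp] theorem pairN_nil : pairN ([] : List (ℕ × List C)) c d = 0 := rfl

@[simp] theorem pairN_cons (w : ℕ) (l : List C) (prof : List (ℕ × List C)) :
    pairN ((w, l) :: prof) c d = (if Prefers l c d then w else 0) + pairN prof c d := rfl

@[simp] theorem pairN_append (prof₁ prof₂ : List (ℕ × List C)) :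
    pairN (prof₁ ++ prof₂) c d = pairN prof₁ c d + pairN prof₂ c d := by
  simp [pairN]

theorem pairN_map {ι : Type*} (f : ι → ℕ × List C) (s : List ι) :
    pairN (s.map f) c d = (s.map fun i => if Prefers (f i).2 c d then (f i).1 else 0).sum := by
  simp [pairN, Function.comp_def, Prefers]

theorem pairN_add_pairN_swap (hprof : ∀ b ∈ prof, c ∈ b.2) (hcd : c ≠ d) :
    pairN prof c d + pairN prof d c = (prof.map Prod.fst).sum := by
  induction prof with
  | nil => rfl
  | cons b prof ih =>
    obtain ⟨w, l⟩ := b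
    have hb := hprof (w, l) List.mem_cons_self
    have ih := ih fun b hb => hprof b (List.mem_cons_of_mem _ hb)
    simp only [pairN_cons, List.map_cons, List.sum_cons]
    rcases prefers_or_prefers hb hcd with h | h
    · rw [if_pos h, if_neg h.asymm]; omega
    · rw [if_neg h.asymm, if_pos h]; omega

theorem copeland_eq_card_of_no_ties [Fintype C] (α : ℚ) (h : ∀ d ≠ c, pairN prof c d ≠ pairN prof d c) :
    copeland prof α c = #{d | d ≠ c ∧ pairN prof d c < pairN prof c d} := by
  have : ({d | d ≠ c ∧ pairN prof c d = pairN prof d c} : Finset C) = ∅ :=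
    Finset.filter_false_of_mem fun d _ hd => h d hd.1 hd.2
  simp [copeland, this]

end Tally

section Construction

variable {m n : ℕ} {inc : Fin m → Fin n → Bool} {v' v'' v : Fin n}

/-- The non-edge part of the ballot of vertex `v`, with `Sum.inr 0, …, Sum.inr 5` standing for
`p, a₁, a₂, b₁, b₂, b₃`: `A ≻ p ≻ B` for `v', v''` and `p ≻ B ≻ A` otherwise. -/
def vertexMid (v' v'' v : Fin n) : List (Fin 6) :=
  if v = v' ∨ v = v'' then [1, 2, 0, 3, 4, 5] else [0, 3, 4, 5, 1, 2]

def vertexBallot (inc : Fin m → Fin n → Bool) (v' v'' v : Fin n) : List (Cand m) :=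
  edgesInc m n inc v ++ (vertexMid v' v'' v).map Sum.inr ++ edgesNot m n inc v

theorem mem_vertexMid (k : Fin 6) : k ∈ vertexMid v' v'' v := by
  unfold vertexMid; split_ifs <;> revert k <;> decide

@[simp] theorem inl_mem_edgesInc {e : Fin m} :
    (Sum.inl e : Cand m) ∈ edgesInc m n inc v ↔ inc e v = true := by
  simp [edgesInc]

@[simp] theorem inl_mem_edgesNot {e : Fin m} :
    (Sum.inl e : Cand m) ∈ edgesNot m n inc v ↔ inc e v = false := by
  simp [edgesNot]

@[simp] theorem inr_notMem_edgesInc {k : Fin 6} : (Sum.inr k : Cand m) ∉ edgesInc m n inc v := by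
  simp [edgesInc]

theorem pairwise_lt_edgesNot : (edgesNot m n inc v).Pairwise (· < ·) :=
  ((List.pairwise_lt_finRange m).filter _).map _ fun _ _ => Sum.inl_lt_inl_iff.2

theorem mem_vertexBallot (c : Cand m) : c ∈ vertexBallot inc v' v'' v := by
  rcases c with e | k
  · cases h : inc e v <;> simp [vertexBallot, h]
  · simp [vertexBallot, mem_vertexMid]

theorem vertexBallot_prefers_inr_inr {k l : Fin 6} (h : Prefers (vertexMid v' v'' v) k l) :
    Prefers (vertexBallot inc v' v'' v) (Sum.inr k) (Sum.inr l) :=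
  ((h.map Sum.inr_injective).append_left inr_notMem_edgesInc inr_notMem_edgesInc).append_right

theorem vertexBallot_prefers_inr_inl {e : Fin m} (he : inc e v = false) (k : Fin 6) :
    Prefers (vertexBallot inc v' v'' v) (Sum.inr k) (Sum.inl e) :=
  prefers_append_of_mem_of_notMem (by simp [mem_vertexMid]) (by simp [he])

theorem vertexBallot_prefers_inl_inr {e : Fin m} (he : inc e v = true) (k : Fin 6) :
    Prefers (vertexBallot inc v' v'' v) (Sum.inl e) (Sum.inr k) := by
  rw [vertexBallot, List.append_assoc]
  exact prefers_append_of_mem_of_notMem (by simp [he]) inr_notMem_edgesInc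

theorem vertexBallot_prefers_inl_inl {e₁ e₂ : Fin m} (he₂ : inc e₂ v = false) (h : e₁ < e₂) :
    Prefers (vertexBallot inc v' v'' v) (Sum.inl e₁) (Sum.inl e₂) := by
  cases he₁ : inc e₁ v
  · exact Prefers.append_left (by simp [he₁]) (by simp [he₂]) <|
      prefers_of_pairwise_lt pairwise_lt_edgesNot (by simp [he₁]) (by simp [he₂])
        (Sum.inl_lt_inl_iff.2 h)
  · exact prefers_append_of_mem_of_notMem (by simp [he₁]) (by simp [he₂])

theorem mem_allEdges (e : Fin m) : (Sum.inl e : Cand m) ∈ allEdges m := by simp [allEdges]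

theorem pairwise_lt_allEdges : (allEdges m).Pairwise (· < ·) :=
  (List.pairwise_lt_finRange m).map _ fun _ _ => Sum.inl_lt_inl_iff.2

theorem mem_partyP (c : Cand m) : c ∈ partyP m := by
  rcases c with e | k
  · simp [partyP, mem_allEdges]
  · fin_cases k <;> simp [partyP, a1, a2, pC, b1, b2, b3]

theorem mem_partyP1 (c : Cand m) : c ∈ partyP1 m := by
  rcases c with e | k
  · simp [partyP1, mem_allEdges]
  · fin_cases k <;> simp [partyP1, a1, a2, pC, b1, b2, b3]

theorem mem_partyP2 (c : Cand m) : c ∈ partyP2 m := by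
  rcases c with e | k
  · simp [partyP2, mem_allEdges]
  · fin_cases k <;> simp [partyP2, a1, a2, pC, b1, b2, b3]

theorem partyP1_prefers_inr_inl {k : Fin 6} (hk : k < 3) (e : Fin m) :
    Prefers (partyP1 m) (Sum.inr k) (Sum.inl e) := by
  rw [partyP1, List.append_assoc]
  refine prefers_append_of_mem_of_notMem ?_ (by simp [a1, pC, a2])
  simp only [a1, pC, a2, List.mem_cons, Sum.inr.injEq, List.not_mem_nil, or_false]
  omega

theorem partyP1_prefers_inl_inr {k : Fin 6} (hk : 3 ≤ k) (e : Fin m) :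
    Prefers (partyP1 m) (Sum.inl e) (Sum.inr k) :=
  prefers_append_of_mem_of_notMem (by simp [mem_allEdges])
    (by
      simp only [a1, pC, a2, allEdges, List.cons_append, List.nil_append, List.mem_cons,
        Sum.inr.injEq, List.mem_map, reduceCtorEq, and_false, exists_false, or_false, not_or]
      omega)

theorem partyP1_prefers_inl_inl {e₁ e₂ : Fin m} (h : e₁ < e₂) :
    Prefers (partyP1 m) (Sum.inl e₁) (Sum.inl e₂) := by
  rw [partyP1, List.append_assoc]
  refine Prefers.append_left (by simp [a1, pC, a2]) (by simp [a1, pC, a2]) (Prefers.append_right ?_)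
  exact prefers_of_pairwise_lt pairwise_lt_allEdges (mem_allEdges e₁) (mem_allEdges e₂)
    (Sum.inl_lt_inl_iff.2 h)

theorem partyP1_prefers_inr_inr {k l : Fin 6} (h : Prefers [1, 0, 2] k l) :
    Prefers (partyP1 m) (Sum.inr k) (Sum.inr l) := by
  rw [partyP1, List.append_assoc]
  exact (h.map Sum.inr_injective).append_right

theorem partyP2_prefers_inl_inr (e : Fin m) (k : Fin 6) :
    Prefers (partyP2 m) (Sum.inl e) (Sum.inr k) :=
  prefers_append_of_mem_of_notMem (mem_allEdges e) (by simp [allEdges])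

theorem partyP2_prefers_inr_inr {k l : Fin 6} (h : Prefers [3, 4, 5, 1, 0, 2] k l) :
    Prefers (partyP2 m) (Sum.inr k) (Sum.inr l) :=
  (h.map Sum.inr_injective).append_left (by simp [allEdges]) (by simp [allEdges])

theorem vertexBallot_of_special (h : v = v' ∨ v = v'') :
    vertexBallot inc v' v'' v = specialPref m n inc v := by
  simp only [vertexBallot, vertexMid, if_pos h]; rfl

theorem vertexBallot_of_ordinary (h : ¬(v = v' ∨ v = v'')) :
    vertexBallot inc v' v'' v = ordinaryPref m n inc v := by
  simp only [vertexBallot, vertexMid, if_neg h]; rfl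

theorem sum_map_filter_finRange {M : Type*} [AddCommMonoid M] (q : Fin n → Bool) (g : Fin n → M) :
    (((List.finRange n).filter q).map g).sum = ∑ v with q v, g v := by
  rw [Finset.sum_eq_multiset_sum, Finset.filter_val, Finset.val_univ_fin]; simp

theorem length_filter_finRange (q : Fin n → Bool) :
    ((List.finRange n).filter q).length = #{v | q v} := by
  rw [Finset.card_def, Finset.filter_val, Finset.val_univ_fin]; simp

theorem filter_special :
    ({v | v = v' ∨ v = v''} : Finset (Fin n)) = {v', v''} := by
  ext; simp

theorem card_ordinary (hvv : v' ≠ v'') : #{v : Fin n | ¬(v = v' ∨ v = v'')} = n - 2 := by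
  rw [Finset.filter_not, filter_special, ← Finset.compl_eq_univ_sdiff, Finset.card_compl,
    Finset.card_pair hvv, Fintype.card_fin]

theorem pairN_profile (hvv : v' ≠ v'') (c d : Cand m) :
    pairN (profile m n inc v' v'') c d =
      ∑ v, (if Prefers (vertexBallot inc v' v'' v) c d then 1 else 0) +
      (if Prefers (partyP m) c d then 1 else 0) +
      (if Prefers (partyP1 m) c d then (n - 2) / 2 else 0) +
      (if Prefers (partyP2 m) c d then (n - 2) / 2 else 0) := by
  rw [← Finset.sum_filter_add_sum_filter_not _ (fun v => v = v' ∨ v = v''), filter_special,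
    Finset.sum_pair hvv, vertexBallot_of_special (.inl rfl), vertexBallot_of_special (.inr rfl),
    Finset.sum_congr rfl fun v hv => by rw [vertexBallot_of_ordinary (Finset.mem_filter.1 hv).2]]
  simp only [profile, pairN_append, pairN_cons, pairN_nil, pairN_map, sum_map_filter_finRange]
  simp only [ne_eq, decide_eq_true_eq, not_or]
  ring

theorem profile_total (hvv : v' ≠ v'') (hEven : Even n) (hn : 2 ≤ n) :
    ((profile m n inc v' v'').map Prod.fst).sum = 2 * n - 1 := by
  simp only [profile, List.map_append, List.sum_append, List.map_cons, List.map_nil, List.sum_cons,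
    List.sum_nil, List.map_map, Function.comp_def, sum_map_filter_finRange, Finset.sum_const,
    smul_eq_mul, mul_one, ne_eq, decide_eq_true_eq, ← not_or]
  rw [card_ordinary hvv]
  obtain ⟨r, rfl⟩ := hEven
  omega

theorem mem_profile (c : Cand m) : ∀ b ∈ profile m n inc v' v'', c ∈ b.2 := by
  simp only [profile, List.mem_append, List.mem_cons, List.mem_map, List.mem_filter,
    List.not_mem_nil, or_false]
  rintro b (((rfl | rfl) | ⟨v, ⟨-, hv⟩, rfl⟩) | (rfl | rfl | rfl))
  · exact vertexBallot_of_special (v'' := v'') (.inl rfl) ▸ mem_vertexBallot c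
  · exact vertexBallot_of_special (v' := v') (.inr rfl) ▸ mem_vertexBallot c
  · exact vertexBallot_of_ordinary (by simpa [not_or] using hv) ▸ mem_vertexBallot c
  · exact mem_partyP c
  · exact mem_partyP1 c
  · exact mem_partyP2 c

theorem pairN_profile_add_swap (hvv : v' ≠ v'') (hEven : Even n) (hn : 2 ≤ n) {c d : Cand m}
    (hcd : c ≠ d) :
    pairN (profile m n inc v' v'') c d + pairN (profile m n inc v' v'') d c = 2 * n - 1 := by
  rw [pairN_add_pairN_swap (mem_profile c) hcd, profile_total hvv hEven hn]

theorem card_add_le_pairN_profile (hvv : v' ≠ v'') (Q : Fin n → Prop) [DecidablePred Q]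
    {c d : Cand m} (hQ : ∀ v, Q v → Prefers (vertexBallot inc v' v'' v) c d) :
    #{v | Q v} + (if Prefers (partyP1 m) c d then (n - 2) / 2 else 0) +
      (if Prefers (partyP2 m) c d then (n - 2) / 2 else 0) ≤
      pairN (profile m n inc v' v'') c d := by
  have hvertices : #{v | Q v} ≤ ∑ v, if Prefers (vertexBallot inc v' v'' v) c d then 1 else 0 :=
    (Finset.card_filter _ _).trans_le (Finset.sum_le_sum fun v _ => ite_zero_le_ite_zero 1 (hQ v))
  rw [pairN_profile hvv]
  omega

theorem card_incident
    (hedge : ∀ e : Fin m, ((List.finRange n).filter (fun v => inc e v)).length = 2) (e : Fin m) :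
    #{v | inc e v = true} = 2 := by
  rw [← length_filter_finRange, hedge]

theorem card_not_incident
    (hedge : ∀ e : Fin m, ((List.finRange n).filter (fun v => inc e v)).length = 2) (e : Fin m) :
    #{v | inc e v = false} = n - 2 := by
  have := Finset.card_filter_add_card_filter_not (s := Finset.univ) (fun v => inc e v = true)
  simp only [Bool.not_eq_true, card_incident hedge, Finset.card_univ, Fintype.card_fin] at this
  omega

theorem card_prefers_vertexMid (hvv : v' ≠ v'') (k l : Fin 6) :
    #{v | Prefers (vertexMid v' v'' v) k l} =
      (if Prefers [1, 2, 0, 3, 4, 5] k l then 2 else 0) +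
        (if Prefers [0, 3, 4, 5, 1, 2] k l then n - 2 else 0) := by
  have hsplit : ∀ v, (if Prefers (vertexMid v' v'' v) k l then 1 else 0) =
      if v = v' ∨ v = v'' then (if Prefers [1, 2, 0, 3, 4, 5] k l then 1 else 0)
        else (if Prefers [0, 3, 4, 5, 1, 2] k l then 1 else 0) := fun v => by
    unfold vertexMid; split_ifs <;> rfl
  rw [Finset.card_filter, Finset.sum_congr rfl fun v _ => hsplit v, Finset.sum_ite,
    Finset.sum_const, Finset.sum_const, filter_special, card_ordinary hvv, Finset.card_pair hvv]
  split_ifs <;> simp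

theorem le_pairN_inr_inr (hvv : v' ≠ v'') (k l : Fin 6) :
    (if Prefers [1, 2, 0, 3, 4, 5] k l then 2 else 0) +
        (if Prefers [0, 3, 4, 5, 1, 2] k l then n - 2 else 0) +
        (if Prefers [1, 0, 2] k l then (n - 2) / 2 else 0) +
        (if Prefers [3, 4, 5, 1, 0, 2] k l then (n - 2) / 2 else 0) ≤
      pairN (profile m n inc v' v'') (Sum.inr k) (Sum.inr l) := by
  have h := card_add_le_pairN_profile (inc := inc) hvv (fun v => Prefers (vertexMid v' v'' v) k l)
    fun v => vertexBallot_prefers_inr_inr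
  rw [card_prefers_vertexMid hvv] at h
  have h₁ := ite_zero_le_ite_zero ((n - 2) / 2) (partyP1_prefers_inr_inr (m := m) (k := k) (l := l))
  have h₂ := ite_zero_le_ite_zero ((n - 2) / 2) (partyP2_prefers_inr_inr (m := m) (k := k) (l := l))
  omega

end Construction

section Tournament

variable {m : ℕ}

/-- The majority tournament of the profile (see `pairN_lt_pairN_iff_beats`), indexed as in
`vertexMid`. -/
def Beats : Cand m → Cand m → Prop
  | .inl i, .inl j => i < j
  | .inl _, .inr k => 3 ≤ k
  | .inr k, .inl _ => k < 3
  | .inr k, .inr l =>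
      (k = 0 ∧ (l = 2 ∨ 3 ≤ l)) ∨ (k = 1 ∧ (l = 0 ∨ l = 2)) ∨ (3 ≤ k ∧ (l = 1 ∨ l = 2 ∨ k < l))

instance : DecidableRel (Beats (m := m)) := fun c d => by
  cases c <;> cases d <;> unfold Beats <;> infer_instance

theorem beats_irrefl (c : Cand m) : ¬ Beats c c := by
  rcases c with i | k
  · exact lt_irrefl i
  · simp only [Beats]; revert k; decide

theorem beats_or_beats {c d : Cand m} (hcd : c ≠ d) : Beats c d ∨ Beats d c := by
  rcases c with i | k <;> rcases d with j | l
  · exact lt_or_gt_of_ne fun h => hcd (congrArg _ h)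
  · exact (le_or_gt 3 l).imp id id
  · exact (lt_or_ge k 3).imp id id
  · have hkl : k ≠ l := fun h => hcd (congrArg _ h)
    simp only [Beats]; clear hcd; revert k l; decide

theorem card_beats_inl (i : Fin m) :
    #{d | Beats (Sum.inl i : Cand m) d} = m - (i + 1) + 3 := by
  have hIoi : ({j | Beats (Sum.inl i : Cand m) (Sum.inl j)} : Finset (Fin m)) = Finset.Ioi i := by
    ext j; simp only [Finset.mem_filter, Finset.mem_univ, true_and, Finset.mem_Ioi]; rfl
  rw [Finset.card_filter, Fintype.sum_sum_type, Fin.sum_univ_six, ← Finset.card_filter, hIoi,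
    Fin.card_Ioi]
  simp only [Beats, Fin.isValue, nonpos_iff_eq_zero, Fin.reduceEq, ↓reduceIte, Fin.reduceLE,
    add_zero, Std.le_refl, zero_add, Nat.reduceAdd]
  omega

theorem card_beats_inr (k : Fin 6) :
    #{d | Beats (Sum.inr k : Cand m) d} = (if k < 3 then m else 0) + ![4, 2, 0, 4, 3, 2] k := by
  rw [Finset.card_filter, Fintype.sum_sum_type, Fin.sum_univ_six]
  fin_cases k <;> simp [Beats]

theorem card_beats_lt_card_beats_pC (hm : 0 < m) {c : Cand m} (hc : c ≠ pC m) :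
    #{d | Beats c d} < #{d | Beats (pC m) d} := by
  rw [pC, card_beats_inr]
  rcases c with i | k
  · rw [card_beats_inl]; simp
  · rw [card_beats_inr]
    fin_cases k <;> simp_all [pC]

end Tournament

section Majority

variable {m n : ℕ} {inc : Fin m → Fin n → Bool} {v' v'' : Fin n}

theorem n_le_pairN_of_beats (hvv : v' ≠ v'') (hEven : Even n) (hn : 6 ≤ n)
    (hedge : ∀ e : Fin m, ((List.finRange n).filter (fun v => inc e v)).length = 2)
    {c d : Cand m} (h : Beats c d) : n ≤ pairN (profile m n inc v' v'') c d := by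
  obtain ⟨r, rfl⟩ := hEven
  rcases c with i | k <;> rcases d with j | l
  · have := card_add_le_pairN_profile hvv (fun v => inc j v = false)
      fun v hv => vertexBallot_prefers_inl_inl hv h
    rw [card_not_incident hedge, if_pos (partyP1_prefers_inl_inl h)] at this
    omega
  · have := card_add_le_pairN_profile hvv (fun v => inc i v = true)
      fun v hv => vertexBallot_prefers_inl_inr hv l
    rw [card_incident hedge, if_pos (partyP1_prefers_inl_inr h i),
      if_pos (partyP2_prefers_inl_inr i l)] at this
    omega
  · have := card_add_le_pairN_profile hvv (fun v => inc j v = false)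
      fun v hv => vertexBallot_prefers_inr_inl hv k
    rw [card_not_incident hedge, if_pos (partyP1_prefers_inr_inl h j)] at this
    omega
  · -- the fifteen majorities among `p, A, B`, each checked against the bound
    have := le_pairN_inr_inr (inc := inc) hvv k l
    fin_cases k <;> fin_cases l <;> simp (config := { decide := true }) [Beats] at h this ⊢ <;>
      omega

theorem pairN_lt_pairN_iff_beats (hvv : v' ≠ v'') (hEven : Even n) (hn : 6 ≤ n)
    (hedge : ∀ e : Fin m, ((List.finRange n).filter (fun v => inc e v)).length = 2)
    {c d : Cand m} (hcd : c ≠ d) :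
    pairN (profile m n inc v' v'') d c < pairN (profile m n inc v' v'') c d ↔ Beats c d := by
  have hsum := pairN_profile_add_swap (inc := inc) hvv hEven (by omega) hcd
  refine ⟨fun hlt => (beats_or_beats hcd).resolve_right fun h => ?_, fun h => ?_⟩
  · have := n_le_pairN_of_beats hvv hEven hn hedge h
    omega
  · have := n_le_pairN_of_beats hvv hEven hn hedge h
    omega

theorem copeland_profile (hvv : v' ≠ v'') (hEven : Even n) (hn : 6 ≤ n)
    (hedge : ∀ e : Fin m, ((List.finRange n).filter (fun v => inc e v)).length = 2)
    (α : ℚ) (c : Cand m) : copeland (profile m n inc v' v'') α c = #{d | Beats c d} := by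
  rw [copeland_eq_card_of_no_ties α fun d hdc => ?_]
  · congr 2
    refine Finset.filter_congr fun d _ => ?_
    by_cases hdc : d = c
    · subst hdc; simp [beats_irrefl]
    · rw [and_iff_right hdc, pairN_lt_pairN_iff_beats hvv hEven hn hedge (Ne.symm hdc)]
  · have := pairN_profile_add_swap (inc := inc) hvv hEven (by omega) (Ne.symm hdc)
    omega

end Majority

theorem stmt_14_general (m n : ℕ) (hEven : Even n) (hn : 6 ≤ n)
    (inc : Fin m → Fin n → Bool) (v' v'' : Fin n) (hvv : v' ≠ v'')
    (hdeg' : ((List.finRange m).filter (fun e => inc e v')).length = 1)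
    (hedge : ∀ e : Fin m, ((List.finRange n).filter (fun v => inc e v)).length = 2)
    (α : ℚ) :
    copeland (profile m n inc v' v'') α (pC m) = (m : ℚ) + 4 ∧
    copeland (profile m n inc v' v'') α (a1 m) = (m : ℚ) + 2 ∧
    copeland (profile m n inc v' v'') α (a2 m) = (m : ℚ) ∧
    copeland (profile m n inc v' v'') α (b1 m) = 4 ∧
    copeland (profile m n inc v' v'') α (b2 m) = 3 ∧
    copeland (profile m n inc v' v'') α (b3 m) = 2 ∧
    (∀ i : Fin m,
      copeland (profile m n inc v' v'') α (Sum.inl i) = (m : ℚ) - ((i : ℕ) + 1) + 3) ∧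
    (∀ c : Cand m, c ≠ pC m →
      copeland (profile m n inc v' v'') α c <
        copeland (profile m n inc v' v'') α (pC m)) := by
  have hm : 0 < m := Nat.pos_of_ne_zero fun hm0 => by subst hm0; simp at hdeg'
  have hscore := copeland_profile (inc := inc) hvv hEven hn hedge α
  refine ⟨?_, ?_, ?_, ?_, ?_, ?_, fun i => ?_, fun c hc => ?_⟩
  iterate 6 simp [hscore, pC, a1, a2, b1, b2, b3, card_beats_inr]
  · rw [hscore, card_beats_inl, Nat.cast_add, Nat.cast_sub i.isLt]
    push_cast
    ring
  · rw [hscore, hscore]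
    exact_mod_cast card_beats_lt_card_beats_pC hm hc

/-- In the initial profile of the Copeland reduction, the Copeland^α scores are
`s(p) = |E| + 4`, `s(a₁) = |E| + 2`, `s(a₂) = |E|`, `s(b_i) = 5 − i`, and
`s(e_i) = |E| − i + 3` (with 1-based index `i`); hence `p` is the unique
Copeland^α winner. -/
theorem stmt_14 (m n : ℕ) (hEven : Even n) (hn : 6 ≤ n)
    (inc : Fin m → Fin n → Bool) (v' v'' : Fin n) (hvv : v' ≠ v'')
    (hdeg' : ((List.finRange m).filter (fun e => inc e v')).length = 1)
    (hdeg'' : ((List.finRange m).filter (fun e => inc e v'')).length = 1)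
    (hedge : ∀ e : Fin m, ((List.finRange n).filter (fun v => inc e v)).length = 2)
    (α : ℚ) (hα0 : 0 ≤ α) (hα1 : α ≤ 1) :
    copeland (profile m n inc v' v'') α (pC m) = (m : ℚ) + 4 ∧
    copeland (profile m n inc v' v'') α (a1 m) = (m : ℚ) + 2 ∧
    copeland (profile m n inc v' v'') α (a2 m) = (m : ℚ) ∧
    copeland (profile m n inc v' v'') α (b1 m) = 4 ∧
    copeland (profile m n inc v' v'') α (b2 m) = 3 ∧
    copeland (profile m n inc v' v'') α (b3 m) = 2 ∧
    (∀ i : Fin m,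
      copeland (profile m n inc v' v'') α (Sum.inl i) = (m : ℚ) - ((i : ℕ) + 1) + 3) ∧
    (∀ c : Cand m, c ≠ pC m →
      copeland (profile m n inc v' v'') α c <
        copeland (profile m n inc v' v'') α (pC m)) :=
  stmt_14_general m n hEven hn inc v' v'' hvv hdeg' hedge α

end Stmt14
end

section
/- In the Maximin reduction election from an X3C instance, if S ⊆ 𝒮 is an exact 3-set cover and all voters of the parties corresponding to S switch to the party P (with preference z ≻ X ≻ p ≻ α ≻ β), then in the resulting election N(z, x_i) ≥ n + 1 for every x_i ∈ X, and hence the Maximin score of z is at least n + 1 ≥ s(p), so p is no longer the unique Maximin winner. -/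
namespace Stmt17

/-- Candidates: one per element of `X` (`Sum.inl`) plus `p, z, α, β`. -/
abbrev Cand (m : ℕ) := Fin m ⊕ Fin 4

def pC (m : ℕ) : Cand m := Sum.inr 0
def zC (m : ℕ) : Cand m := Sum.inr 1
/-- The candidate `α` of the construction. -/
def aC (m : ℕ) : Cand m := Sum.inr 2
/-- The candidate `β` of the construction. -/
def bC (m : ℕ) : Cand m := Sum.inr 3

def allX (m : ℕ) : List (Cand m) := (List.finRange m).map Sum.inl

/-- `x_i ≻ x_j ≻ x_k ≻ z ≻ p ≻ X \ S_t ≻ β ≻ α`. -/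
def setPref (m : ℕ) (St : Finset (Fin m)) : List (Cand m) :=
  (((List.finRange m).filter (fun x => decide (x ∈ St))).map Sum.inl)
    ++ [zC m, pC m]
    ++ (((List.finRange m).filter (fun x => decide (x ∉ St))).map Sum.inl)
    ++ [bC m, aC m]

/-- `β ≻ α ≻ p ≻ X ≻ z`. -/
def halfPref1 (m : ℕ) : List (Cand m) := [bC m, aC m, pC m] ++ allX m ++ [zC m]

/-- `α ≻ p ≻ X ≻ z ≻ β`. -/
def halfPref2 (m : ℕ) : List (Cand m) := [aC m, pC m] ++ allX m ++ [zC m, bC m]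

def blockIn (m : ℕ) (j : ℕ) : List (Cand m) :=
  ((List.finRange m).filter (fun x : Fin m => decide (x.val / 3 = j))).map Sum.inl

def blockOut (m : ℕ) (j : ℕ) : List (Cand m) :=
  ((List.finRange m).filter (fun x : Fin m => decide (x.val / 3 ≠ j))).map Sum.inl

/-- `β ≻ α ≻ p ≻ X \ B_j ≻ z ≻ B_j`. -/
def blockPref1 (m : ℕ) (j : ℕ) : List (Cand m) :=
  [bC m, aC m, pC m] ++ blockOut m j ++ [zC m] ++ blockIn m j

/-- `α ≻ p ≻ X \ B_j ≻ z ≻ B_j ≻ β`. -/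
def blockPref2 (m : ℕ) (j : ℕ) : List (Cand m) :=
  [aC m, pC m] ++ blockOut m j ++ [zC m] ++ blockIn m j ++ [bC m]

/-- The party `P`: `z ≻ X ≻ p ≻ α ≻ β`. -/
def partyP (m : ℕ) : List (Cand m) := [zC m] ++ allX m ++ [pC m, aC m, bC m]

/-- The profile after the voters of the set-parties in `cover` switch to the
party `P` (i.e. they cast `P`'s preference instead of their own). -/
def profileSwitched (m n : ℕ) (S : Fin n → Finset (Fin m)) (cover : Finset (Fin n)) :
    List (ℕ × List (Cand m)) :=
  ((List.finRange n).map
      (fun t => (1, if t ∈ cover then partyP m else setPref m (S t))))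
    ++ [((n - m / 3) / 2, halfPref1 m), ((n - m / 3) / 2, halfPref2 m)]
    ++ ((List.range (m / 3)).map (fun j => (1, blockPref1 m j)))
    ++ ((List.range (m / 3)).map (fun j => (1, blockPref2 m j)))
    ++ [(1, partyP m)]

/-- `N(c,d)`: the (weighted) number of voters preferring `c` to `d`. -/
def pairN {C : Type*} [DecidableEq C] (prof : List (ℕ × List C)) (c d : C) : ℕ :=
  (prof.map (fun wl => if wl.2.idxOf c < wl.2.idxOf d then wl.1 else 0)).sum

/-- The Maximin score: the minimum over `d ≠ c` of `N(c,d)` (in `ℕ∞`). -/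
noncomputable def maximin {C : Type*} [Fintype C] [DecidableEq C]
    (prof : List (ℕ × List C)) (c : C) : ℕ∞ :=
  (Finset.univ.erase c).inf (fun d => (pairN prof c d : ℕ∞))

/-! Every switched voter and every set-voter whose set avoids `x_i` ranks `z` above `x_i`.
Since `x_i` lies in exactly three sets and exactly one of them is in the cover, only two
set-voters rank `x_i` above `z`; adding the two voters of the block of `x_i` and the extra `P`
voter gives `N(z, x_i) ≥ (n - 2) + 2 + 1`. Against `p`, `α`, `β` the candidate `z` is preferred by
all `n` set-voters and the `P` voter. Conversely every half- and block-voter ranks `α` above `p`,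
so `s(p) ≤ N(p, α) ≤ n + 1`. -/

open Finset

section Ballots

variable {C : Type*} [DecidableEq C]

abbrev RanksAbove (b : List C) (c d : C) : Prop := b.idxOf c < b.idxOf d

theorem RanksAbove.append {l₁ l₂ : List C} {c d : C} (hc : c ∈ l₁) (hd : d ∉ l₁) :
    RanksAbove (l₁ ++ l₂) c d := by
  rw [RanksAbove, List.idxOf_append_of_mem hc, List.idxOf_append_of_notMem hd]
  exact (List.idxOf_lt_length_iff.mpr hc).trans_le (Nat.le_add_right _ _)

theorem RanksAbove.append_cons {l₁ l₂ : List C} {c d : C} (hd₁ : d ∉ l₁) (hd : d ≠ c) :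
    RanksAbove (l₁ ++ c :: l₂) c d := by
  rw [List.append_cons]
  exact RanksAbove.append (by simp) (by simp [hd₁, hd])

theorem RanksAbove.cons {l : List C} {c d : C} (hd : d ≠ c) : RanksAbove (c :: l) c d :=
  RanksAbove.append_cons (l₁ := []) List.not_mem_nil hd

end Ballots

section Tally

variable {C : Type*} [DecidableEq C]

@[simp]
theorem pairN_cons (wl : ℕ × List C) (prof : List (ℕ × List C)) (c d : C) :
    pairN (wl :: prof) c d = (if RanksAbove wl.2 c d then wl.1 else 0) + pairN prof c d := by
  simp [pairN]

@[simp]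
theorem pairN_append (prof₁ prof₂ : List (ℕ × List C)) (c d : C) :
    pairN (prof₁ ++ prof₂) c d = pairN prof₁ c d + pairN prof₂ c d := by
  simp [pairN]

theorem pairN_le_sum_fst (prof : List (ℕ × List C)) (c d : C) :
    pairN prof c d ≤ (prof.map Prod.fst).sum := by
  induction prof with
  | nil => rfl
  | cons wl prof ih =>
    simp only [pairN_cons, List.map_cons, List.sum_cons]
    split_ifs <;> omega

theorem le_pairN_of_mem {prof : List (ℕ × List C)} {w : ℕ} {b : List C} {c d : C}
    (hmem : (w, b) ∈ prof) (hb : RanksAbove b c d) : w ≤ pairN prof c d := by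
  refine List.le_sum_of_mem (List.mem_map.mpr ⟨(w, b), hmem, ?_⟩)
  exact if_pos hb

theorem pairN_eq_zero {prof : List (ℕ × List C)} {c d : C}
    (h : ∀ wl ∈ prof, RanksAbove wl.2 d c) : pairN prof c d = 0 := by
  refine List.sum_eq_zero fun x hx => ?_
  obtain ⟨wl, hwl, rfl⟩ := List.mem_map.mp hx
  exact if_neg (h wl hwl).asymm

theorem pairN_map_finRange {n : ℕ} (f : Fin n → List C) (c d : C) :
    pairN ((List.finRange n).map fun t => (1, f t)) c d = #{t | RanksAbove (f t) c d} := by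
  simp only [pairN, List.map_map, Function.comp_def, ← Fin.sum_univ_def, sum_boole,
    Nat.cast_id]

variable [Fintype C]

theorem maximin_le_pairN (prof : List (ℕ × List C)) {c d : C} (hd : d ≠ c) :
    maximin prof c ≤ pairN prof c d :=
  inf_le (mem_erase.mpr ⟨hd, mem_univ d⟩)

theorem le_maximin {prof : List (ℕ × List C)} {c : C} {k : ℕ}
    (h : ∀ d, d ≠ c → k ≤ pairN prof c d) : (k : ℕ∞) ≤ maximin prof c :=
  Finset.le_inf fun d hd => by exact_mod_cast h d (ne_of_mem_erase hd)

end Tally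

section Construction

variable {m : ℕ}

theorem partyP_ranksAbove_zC {d : Cand m} (hd : d ≠ zC m) : RanksAbove (partyP m) (zC m) d :=
  RanksAbove.cons hd

theorem setPref_ranksAbove_zC {St : Finset (Fin m)} {d : Cand m}
    (hSt : ∀ x ∈ St, d ≠ Sum.inl x) (hd : d ≠ zC m) : RanksAbove (setPref m St) (zC m) d := by
  simp only [setPref, List.append_assoc, List.cons_append]
  exact RanksAbove.append_cons (by simpa using fun x hx => (hSt x hx).symm) hd

theorem blockPref1_ranksAbove_zC {i : Fin m} :
    RanksAbove (blockPref1 m (i / 3)) (zC m) (Sum.inl i) :=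
  RanksAbove.append (by simp) (by simp [blockOut, zC, aC, bC, pC])

theorem blockPref2_ranksAbove_zC {i : Fin m} :
    RanksAbove (blockPref2 m (i / 3)) (zC m) (Sum.inl i) := by
  rw [blockPref2, List.append_assoc _ (blockIn m _)]
  exact RanksAbove.append (by simp) (by simp [blockOut, zC, aC, pC])

theorem halfPref1_ranksAbove_aC : RanksAbove (halfPref1 m) (aC m) (pC m) :=
  RanksAbove.append_cons (l₁ := [bC m]) (by simp [bC, pC]) (by simp [aC, pC])

theorem halfPref2_ranksAbove_aC : RanksAbove (halfPref2 m) (aC m) (pC m) :=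
  RanksAbove.cons (by simp [aC, pC])

theorem blockPref1_ranksAbove_aC (j : ℕ) : RanksAbove (blockPref1 m j) (aC m) (pC m) :=
  RanksAbove.append_cons (l₁ := [bC m]) (by simp [bC, pC]) (by simp [aC, pC])

theorem blockPref2_ranksAbove_aC (j : ℕ) : RanksAbove (blockPref2 m j) (aC m) (pC m) :=
  RanksAbove.cons (by simp [aC, pC])

variable {n : ℕ} {S : Fin n → Finset (Fin m)} {cover : Finset (Fin n)}

theorem card_filter_mem_and_not_mem_cover {i : Fin m} (hocc : #{t | i ∈ S t} = 3)
    (hcover : #{t ∈ cover | i ∈ S t} = 1) : #{t | i ∈ S t ∧ t ∉ cover} = 2 := by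
  have hsub : {t ∈ cover | i ∈ S t} ⊆ ({t | i ∈ S t} : Finset (Fin n)) :=
    fun t ht => by simp_all
  have hdiff : ({t | i ∈ S t ∧ t ∉ cover} : Finset (Fin n)) =
      ({t | i ∈ S t} : Finset (Fin n)) \ {t ∈ cover | i ∈ S t} := by
    ext t
    simp only [mem_filter, mem_univ, true_and, mem_sdiff]
    tauto
  rw [hdiff, card_sdiff_of_subset hsub, hocc, hcover]

theorem pairN_zC_inl {i : Fin m} (hdvd : 3 ∣ m) (hocc : #{t | i ∈ S t} = 3)
    (hcover : #{t ∈ cover | i ∈ S t} = 1) :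
    n + 1 ≤ pairN (profileSwitched m n S cover) (zC m) (Sum.inl i) := by
  have hsets : n - 2 ≤
      #{t | RanksAbove (if t ∈ cover then partyP m else setPref m (S t)) (zC m) (Sum.inl i)} := by
    calc n - 2 = #{t | ¬(i ∈ S t ∧ t ∉ cover)} := by
          rw [filter_not, card_sdiff_of_subset (filter_subset _ _), card_univ, Fintype.card_fin,
            card_filter_mem_and_not_mem_cover hocc hcover]
      _ ≤ _ := by
          refine card_le_card (monotone_filter_right _ fun t _ ht => ?_)
          split_ifs with hcov
          · exact partyP_ranksAbove_zC Sum.inl_ne_inr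
          · exact setPref_ranksAbove_zC (fun x hx h => ht ⟨Sum.inl_injective h ▸ hx, hcov⟩)
              Sum.inl_ne_inr
  have hblock : (i : ℕ) / 3 ∈ List.range (m / 3) :=
    List.mem_range.mpr (Nat.div_lt_div_of_lt_of_dvd hdvd i.isLt)
  have hblock₁ := le_pairN_of_mem (List.mem_map_of_mem (f := fun j => (1, blockPref1 m j)) hblock)
    blockPref1_ranksAbove_zC
  have hblock₂ := le_pairN_of_mem (List.mem_map_of_mem (f := fun j => (1, blockPref2 m j)) hblock)
    blockPref2_ranksAbove_zC
  have hP := le_pairN_of_mem (List.mem_singleton_self (1, partyP m))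
    (partyP_ranksAbove_zC (Sum.inl_ne_inr (a := i)))
  simp only [profileSwitched, pairN_append, pairN_map_finRange] at hblock₁ hblock₂ hP ⊢
  omega

theorem pairN_zC_inr {k : Fin 4} (hk : Sum.inr k ≠ zC m) :
    n + 1 ≤ pairN (profileSwitched m n S cover) (zC m) (Sum.inr k) := by
  have hsets : #{t | RanksAbove (if t ∈ cover then partyP m else setPref m (S t))
      (zC m) (Sum.inr k)} = n := by
    rw [filter_true_of_mem fun t _ => ?_, card_univ, Fintype.card_fin]
    split_ifs
    · exact partyP_ranksAbove_zC hk
    · exact setPref_ranksAbove_zC (fun x _ => Sum.inr_ne_inl) hk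
  have hP := le_pairN_of_mem (List.mem_singleton_self (1, partyP m)) (partyP_ranksAbove_zC hk)
  simp only [profileSwitched, pairN_append, pairN_map_finRange] at hP ⊢
  omega

theorem le_maximin_zC (hdvd : 3 ∣ m) (hocc : ∀ x : Fin m, #{t | x ∈ S t} = 3)
    (hcover : ∀ x : Fin m, #{t ∈ cover | x ∈ S t} = 1) :
    ((n + 1 : ℕ) : ℕ∞) ≤ maximin (profileSwitched m n S cover) (zC m) := by
  refine le_maximin fun d hd => ?_
  rcases d with i | k
  · exact pairN_zC_inl hdvd (hocc i) (hcover i)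
  · exact pairN_zC_inr hd

theorem pairN_pC_aC_le : pairN (profileSwitched m n S cover) (pC m) (aC m) ≤ n + 1 := by
  have hhalves : pairN [((n - m / 3) / 2, halfPref1 m), ((n - m / 3) / 2, halfPref2 m)]
      (pC m) (aC m) = 0 :=
    pairN_eq_zero <| by simp [halfPref1_ranksAbove_aC, halfPref2_ranksAbove_aC]
  have hblocks₁ :
      pairN ((List.range (m / 3)).map fun j => (1, blockPref1 m j)) (pC m) (aC m) = 0 :=
    pairN_eq_zero <| by simp [blockPref1_ranksAbove_aC]
  have hblocks₂ :
      pairN ((List.range (m / 3)).map fun j => (1, blockPref2 m j)) (pC m) (aC m) = 0 :=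
    pairN_eq_zero <| by simp [blockPref2_ranksAbove_aC]
  have hsets := card_filter_le (univ : Finset (Fin n))
    fun t => RanksAbove (if t ∈ cover then partyP m else setPref m (S t)) (pC m) (aC m)
  have hP := pairN_le_sum_fst [(1, partyP m)] (pC m) (aC m)
  simp only [profileSwitched, pairN_append, pairN_map_finRange, card_univ, Fintype.card_fin,
    List.map_cons, List.map_nil, List.sum_cons, List.sum_nil] at hsets hP ⊢
  omega

theorem maximin_pC_le : maximin (profileSwitched m n S cover) (pC m) ≤ ((n + 1 : ℕ) : ℕ∞) :=
  (maximin_le_pairN _ (d := aC m) (by simp [aC, pC])).trans (by exact_mod_cast pairN_pC_aC_le)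

end Construction

theorem stmt_17_general (m n : ℕ) (S : Fin n → Finset (Fin m))
    (hdvd : 3 ∣ m)
    (hocc : ∀ x : Fin m, (Finset.univ.filter (fun t : Fin n => x ∈ S t)).card = 3)
    (cover : Finset (Fin n))
    (hcover : ∀ x : Fin m, (cover.filter (fun t => x ∈ S t)).card = 1) :
    (∀ i : Fin m,
      n + 1 ≤ pairN (profileSwitched m n S cover) (zC m) (Sum.inl i)) ∧
    ((n + 1 : ℕ) : ℕ∞) ≤ maximin (profileSwitched m n S cover) (zC m) ∧
    maximin (profileSwitched m n S cover) (pC m) ≤ ((n + 1 : ℕ) : ℕ∞) ∧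
    ¬ (∀ c : Cand m, c ≠ pC m →
        maximin (profileSwitched m n S cover) c <
          maximin (profileSwitched m n S cover) (pC m)) := by
  have hz := le_maximin_zC hdvd hocc hcover
  have hp := maximin_pC_le (S := S) (cover := cover)
  refine ⟨fun i => pairN_zC_inl hdvd (hocc i) (hcover i), hz, hp, fun hwin => ?_⟩
  exact (hwin (zC m) (by simp [zC, pC])).not_ge (hp.trans hz)

/-- If `cover` is an exact 3-set cover and all voters of the corresponding
set-parties switch to the party `P` (with preference `z ≻ X ≻ p ≻ α ≻ β`),
then in the resulting election `N(z, x_i) ≥ n + 1` for every `x_i`, the Maximin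
score of `z` is at least `n + 1 ≥ s(p)`, and hence `p` is no longer the unique
Maximin winner. -/
theorem stmt_17 (m n : ℕ) (S : Fin n → Finset (Fin m))
    (hm3 : 3 ≤ m) (hdvd : 3 ∣ m) (hmn : m / 3 < n) (hEven : Even (n - m / 3))
    (hsize : ∀ t : Fin n, (S t).card = 3)
    (hocc : ∀ x : Fin m, (Finset.univ.filter (fun t : Fin n => x ∈ S t)).card = 3)
    (cover : Finset (Fin n))
    (hcover : ∀ x : Fin m, (cover.filter (fun t => x ∈ S t)).card = 1) :
    (∀ i : Fin m,
      n + 1 ≤ pairN (profileSwitched m n S cover) (zC m) (Sum.inl i)) ∧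
    ((n + 1 : ℕ) : ℕ∞) ≤ maximin (profileSwitched m n S cover) (zC m) ∧
    maximin (profileSwitched m n S cover) (pC m) ≤ ((n + 1 : ℕ) : ℕ∞) ∧
    ¬ (∀ c : Cand m, c ≠ pC m →
        maximin (profileSwitched m n S cover) c <
          maximin (profileSwitched m n S cover) (pC m)) :=
  stmt_17_general m n S hdvd hocc cover hcover

end Stmt17
end

section
/- In the Maximin (Independent Set) reduction election, if S is an independent set of G of size k and the k voters of the parties P_v for v ∈ S switch to party P, then for every edge-candidate e_i at most one switched voter originally preferred p to e_i, hence N(p, e_i) ≥ n+1 after the switch; moreover every e_i beats p by at most n after the switch, so the Maximin score of p remains n+1 and every e_i has Maximin score at most n, and p remains the unique Maximin winner. -/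
/-! Every ballot ranks `p` above `b`, and the `n + 1` voters of `P'` and `P` rank `p` above `a`
and `b` above `a`. Against an edge `e`, the `n` voters of `P'` prefer `p`, and so does the vertex
voter at an endpoint of `e` outside `S`, which exists because `e` has two endpoints and at most
one of them lies in `S`. With `2n + 1` voters in all, a candidate beaten by `n + 1` voters has
Maximin score at most `n`; this caps `e`, `a` and `b` at `n`, and, since the `n` voters of `P'`
rank `b` above `p`, also caps `p` at `n + 1`. -/

namespace Stmt19

/-- Candidates: one per edge (`Sum.inl`) plus `p, a, b`. -/
abbrev Cand (m : ℕ) := Fin m ⊕ Fin 3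

def pC (m : ℕ) : Cand m := Sum.inr 0
def aC (m : ℕ) : Cand m := Sum.inr 1
def bC (m : ℕ) : Cand m := Sum.inr 2

def edgesInc (m n : ℕ) (inc : Fin m → Fin n → Bool) (v : Fin n) : List (Cand m) :=
  ((List.finRange m).filter (fun e => inc e v)).map Sum.inl

def edgesNot (m n : ℕ) (inc : Fin m → Fin n → Bool) (v : Fin n) : List (Cand m) :=
  ((List.finRange m).filter (fun e => !(inc e v))).map Sum.inl

def allEdges (m : ℕ) : List (Cand m) := (List.finRange m).map Sum.inl

/-- The vertex party `P_v`: `a ≻ (E \ E(v)) ≻ p ≻ E(v) ≻ b`. -/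
def vertexPref (m n : ℕ) (inc : Fin m → Fin n → Bool) (v : Fin n) : List (Cand m) :=
  [aC m] ++ edgesNot m n inc v ++ [pC m] ++ edgesInc m n inc v ++ [bC m]

/-- The party `P'` (n voters): `b ≻ p ≻ reverse(E) ≻ a`. -/
def partyP' (m : ℕ) : List (Cand m) := [bC m, pC m] ++ (allEdges m).reverse ++ [aC m]

/-- The party `P` (one voter): `E ≻ p ≻ b ≻ a`. -/
def partyP (m : ℕ) : List (Cand m) := allEdges m ++ [pC m, bC m, aC m]

/-- The profile after the voters of the vertex parties `P_v`, `v ∈ S`, switch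
to party `P` (casting `P`'s preference `E ≻ p ≻ b ≻ a`). -/
def profileSwitched (m n : ℕ) (inc : Fin m → Fin n → Bool) (S : Finset (Fin n)) :
    List (ℕ × List (Cand m)) :=
  ((List.finRange n).map
      (fun v => (1, if v ∈ S then partyP m else vertexPref m n inc v)))
    ++ [(n, partyP' m), (1, partyP m)]

/-- `N(c,d)`: the (weighted) number of voters preferring `c` to `d`. -/
def pairN {C : Type*} [DecidableEq C] (prof : List (ℕ × List C)) (c d : C) : ℕ :=
  (prof.map (fun wl => if wl.2.idxOf c < wl.2.idxOf d then wl.1 else 0)).sum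

/-- The Maximin score: the minimum over `d ≠ c` of `N(c,d)` (in `ℕ∞`). -/
noncomputable def maximin {C : Type*} [Fintype C] [DecidableEq C]
    (prof : List (ℕ × List C)) (c : C) : ℕ∞ :=
  (Finset.univ.erase c).inf (fun d => (pairN prof c d : ℕ∞))

open Finset

section Profiles
variable {α : Type*} [DecidableEq α]

abbrev Prefers (l : List α) (x y : α) : Prop := l.idxOf x < l.idxOf y

lemma prefers_append {l₁ l₂ : List α} {x y : α} (hx : x ∈ l₁) (hy : y ∉ l₁) :
    Prefers (l₁ ++ l₂) x y := by
  rw [Prefers, List.idxOf_append_of_mem hx, List.idxOf_append_of_notMem hy]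
  exact (List.idxOf_lt_length_of_mem hx).trans_le (Nat.le_add_right _ _)

lemma prefers_of_prefix {l₁ l : List α} {x y : α} (hl : l₁ <+: l) (hx : x ∈ l₁)
    (hy : y ∉ l₁) : Prefers l x y := by
  obtain ⟨l₂, rfl⟩ := hl
  exact prefers_append hx hy

lemma pairN_append (P₁ P₂ : List (ℕ × List α)) (c d : α) :
    pairN (P₁ ++ P₂) c d = pairN P₁ c d + pairN P₂ c d := by
  simp [pairN]

lemma pairN_pair (w₁ w₂ : ℕ) (l₁ l₂ : List α) (c d : α) :
    pairN [(w₁, l₁), (w₂, l₂)] c d =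
      (if Prefers l₁ c d then w₁ else 0) + if Prefers l₂ c d then w₂ else 0 := by
  simp [pairN]

lemma pairN_map_finRange {n : ℕ} (f : Fin n → List α) (c d : α) :
    pairN ((List.finRange n).map fun v => (1, f v)) c d = #{v | Prefers (f v) c d} := by
  rw [card_filter, Fin.sum_univ_def, pairN, List.map_map]
  rfl

lemma pairN_add_pairN_swap_le (P : List (ℕ × List α)) (c d : α) :
    pairN P c d + pairN P d c ≤ (P.map Prod.fst).sum := by
  induction P with
  | nil => simp [pairN]
  | cons wl P ih =>
    simp only [pairN, List.map_cons, List.sum_cons] at ih ⊢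
    split_ifs <;> omega

variable [Fintype α] {P : List (ℕ × List α)} {c d : α}

lemma maximin_le_pairN (h : d ≠ c) : maximin P c ≤ pairN P c d :=
  Finset.inf_le (Finset.mem_erase.2 ⟨h, Finset.mem_univ d⟩)

lemma le_maximin {x : ℕ} (h : ∀ d ≠ c, x ≤ pairN P c d) : (x : ℕ∞) ≤ maximin P c :=
  Finset.le_inf fun d hd => by exact_mod_cast h d (Finset.ne_of_mem_erase hd)

end Profiles

section Election
variable {m n : ℕ} {inc : Fin m → Fin n → Bool} {S : Finset (Fin n)} {e : Fin m} {v : Fin n}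

lemma vertexPref_prefers_p_b : Prefers (vertexPref m n inc v) (pC m) (bC m) := by
  rw [vertexPref]
  exact prefers_append (by simp) (by simp [edgesInc, edgesNot, aC, pC, bC])

lemma vertexPref_prefers_p_edge (h : inc e v) : Prefers (vertexPref m n inc v) (pC m) (.inl e) := by
  rw [vertexPref, List.append_assoc]
  exact prefers_append (by simp) (by simp [edgesNot, aC, pC, h])

lemma partyP_prefers_p_b : Prefers (partyP m) (pC m) (bC m) :=
  prefers_of_prefix (l₁ := allEdges m ++ [pC m]) (by simp [partyP]) (by simp)
    (by simp [allEdges, pC, bC])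

lemma partyP_prefers_p_a : Prefers (partyP m) (pC m) (aC m) :=
  prefers_of_prefix (l₁ := allEdges m ++ [pC m]) (by simp [partyP]) (by simp)
    (by simp [allEdges, pC, aC])

lemma partyP_prefers_b_a : Prefers (partyP m) (bC m) (aC m) :=
  prefers_of_prefix (l₁ := allEdges m ++ [pC m, bC m]) (by simp [partyP]) (by simp)
    (by simp [allEdges, pC, aC, bC])

lemma partyP'_prefers_b_p : Prefers (partyP' m) (bC m) (pC m) :=
  prefers_of_prefix (l₁ := [bC m]) (by simp [partyP']) (by simp) (by simp [pC, bC])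

lemma partyP'_prefers_b_a : Prefers (partyP' m) (bC m) (aC m) :=
  prefers_of_prefix (l₁ := [bC m]) (by simp [partyP']) (by simp) (by simp [aC, bC])

lemma partyP'_prefers_p_a : Prefers (partyP' m) (pC m) (aC m) :=
  prefers_of_prefix (l₁ := [bC m, pC m]) (by simp [partyP']) (by simp) (by simp [aC, bC, pC])

lemma partyP'_prefers_p_edge : Prefers (partyP' m) (pC m) (.inl e) :=
  prefers_of_prefix (l₁ := [bC m, pC m]) (by simp [partyP']) (by simp) (by simp [bC, pC])

def ballot (m n : ℕ) (inc : Fin m → Fin n → Bool) (S : Finset (Fin n)) (v : Fin n) :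
    List (Cand m) :=
  if v ∈ S then partyP m else vertexPref m n inc v

lemma ballot_prefers_p_b : Prefers (ballot m n inc S v) (pC m) (bC m) := by
  unfold ballot
  split_ifs
  exacts [partyP_prefers_p_b, vertexPref_prefers_p_b]

lemma pairN_profileSwitched (c d : Cand m) :
    pairN (profileSwitched m n inc S) c d = #{v | Prefers (ballot m n inc S v) c d} +
      ((if Prefers (partyP' m) c d then n else 0) + if Prefers (partyP m) c d then 1 else 0) := by
  rw [profileSwitched, pairN_append, pairN_pair, ← pairN_map_finRange]
  rfl

lemma pairN_add_pairN_swap_le_profileSwitched (c d : Cand m) :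
    pairN (profileSwitched m n inc S) c d + pairN (profileSwitched m n inc S) d c ≤
      2 * n + 1 := by
  refine (pairN_add_pairN_swap_le _ c d).trans_eq ?_
  simp [profileSwitched, Function.comp_def, two_mul, add_assoc]

lemma succ_le_pairN_of_prefers {c d : Cand m} (h' : Prefers (partyP' m) c d)
    (h : Prefers (partyP m) c d) : n + 1 ≤ pairN (profileSwitched m n inc S) c d := by
  rw [pairN_profileSwitched, if_pos h', if_pos h]
  omega

lemma pairN_p_b : pairN (profileSwitched m n inc S) (pC m) (bC m) = n + 1 := by
  rw [pairN_profileSwitched, if_neg (lt_asymm partyP'_prefers_b_p), if_pos partyP_prefers_p_b,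
    filter_true_of_mem fun v _ => ballot_prefers_p_b, card_univ, Fintype.card_fin]

lemma exists_endpoint_not_mem
    (hedge : ((List.finRange n).filter (fun v => inc e v)).length = 2)
    (hind : (S.filter (fun v => inc e v)).card ≤ 1) : ∃ v ∉ S, inc e v := by
  by_contra! h
  have hsub : univ.filter (fun v => inc e v) ⊆ S.filter (fun v => inc e v) := fun v hv => by
    simp only [mem_filter, mem_univ, true_and] at hv ⊢
    exact ⟨by_contra (h v · hv), hv⟩
  have hcard : (univ.filter (fun v => inc e v)).card = 2 := by
    rw [← hedge, Fin.univ_def, card_def, filter_val]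
    simp
  have := card_le_card hsub
  omega

lemma succ_le_pairN_p_edge (h : ∃ v ∉ S, inc e v) :
    n + 1 ≤ pairN (profileSwitched m n inc S) (pC m) (.inl e) := by
  obtain ⟨v, hvS, hv⟩ := h
  have hpos : 0 < #{v | Prefers (ballot m n inc S v) (pC m) (.inl e)} :=
    card_pos.2 ⟨v, by simpa [ballot, hvS] using vertexPref_prefers_p_edge hv⟩
  rw [pairN_profileSwitched, if_pos partyP'_prefers_p_edge]
  omega

lemma pairN_le_of_succ_le_pairN_swap {c d : Cand m}
    (h : n + 1 ≤ pairN (profileSwitched m n inc S) d c) :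
    pairN (profileSwitched m n inc S) c d ≤ n := by
  have := pairN_add_pairN_swap_le_profileSwitched (inc := inc) (S := S) c d
  omega

lemma maximin_le_of_succ_le_pairN_swap {c d : Cand m} (hdc : d ≠ c)
    (h : n + 1 ≤ pairN (profileSwitched m n inc S) d c) :
    maximin (profileSwitched m n inc S) c ≤ n :=
  (maximin_le_pairN hdc).trans (by exact_mod_cast pairN_le_of_succ_le_pairN_swap h)

lemma maximin_p_eq (h : ∀ e, ∃ v ∉ S, inc e v) :
    maximin (profileSwitched m n inc S) (pC m) = ((n + 1 : ℕ) : ℕ∞) := by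
  refine le_antisymm (pairN_p_b (inc := inc) ▸ maximin_le_pairN (by simp [bC, pC]))
    (le_maximin fun d hd => ?_)
  match d with
  | .inl e => exact succ_le_pairN_p_edge (h e)
  | .inr 0 => exact absurd rfl hd
  | .inr 1 => exact succ_le_pairN_of_prefers partyP'_prefers_p_a partyP_prefers_p_a
  | .inr 2 => exact pairN_p_b.ge

lemma maximin_le_of_ne_p (h : ∀ e, ∃ v ∉ S, inc e v) {c : Cand m} (hc : c ≠ pC m) :
    maximin (profileSwitched m n inc S) c ≤ n := by
  match c with
  | .inl e =>
    exact maximin_le_of_succ_le_pairN_swap (by simp [pC]) (succ_le_pairN_p_edge (h e))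
  | .inr 0 => exact absurd rfl hc
  | .inr 1 =>
    exact maximin_le_of_succ_le_pairN_swap (c := aC m) (by simp [aC, bC])
      (succ_le_pairN_of_prefers partyP'_prefers_b_a partyP_prefers_b_a)
  | .inr 2 =>
    exact maximin_le_of_succ_le_pairN_swap (c := bC m) (by simp [pC, bC]) pairN_p_b.ge

end Election

theorem stmt_19_general (m n : ℕ)
    (inc : Fin m → Fin n → Bool)
    (hedge : ∀ e : Fin m, ((List.finRange n).filter (fun v => inc e v)).length = 2)
    (S : Finset (Fin n))
    (hind : ∀ e : Fin m, (S.filter (fun v => inc e v)).card ≤ 1) :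
    (∀ e : Fin m, (S.filter (fun v => inc e v)).card ≤ 1) ∧
    (∀ e : Fin m, n + 1 ≤ pairN (profileSwitched m n inc S) (pC m) (Sum.inl e)) ∧
    (∀ e : Fin m, pairN (profileSwitched m n inc S) (Sum.inl e) (pC m) ≤ n) ∧
    maximin (profileSwitched m n inc S) (pC m) = ((n + 1 : ℕ) : ℕ∞) ∧
    (∀ e : Fin m, maximin (profileSwitched m n inc S) (Sum.inl e) ≤ (n : ℕ∞)) ∧
    (∀ c : Cand m, c ≠ pC m →
      maximin (profileSwitched m n inc S) c <
        maximin (profileSwitched m n inc S) (pC m)) := by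
  have hout : ∀ e, ∃ v ∉ S, inc e v := fun e => exists_endpoint_not_mem (hedge e) (hind e)
  refine ⟨hind, fun e => succ_le_pairN_p_edge (hout e),
    fun e => pairN_le_of_succ_le_pairN_swap (succ_le_pairN_p_edge (hout e)), maximin_p_eq hout,
    fun e => maximin_le_of_ne_p hout (by simp [pC]), fun c hc => ?_⟩
  rw [maximin_p_eq hout]
  exact (maximin_le_of_ne_p hout hc).trans_lt (by exact_mod_cast n.lt_succ_self)

/-- If `S` is an independent set of `G` of size `k` and the `k` voters of the
parties `P_v`, `v ∈ S`, switch to party `P`, then for every edge-candidate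
`e_i` at most one switched voter originally preferred `p` to `e_i` (i.e. at
most one vertex of `S` is incident to `e_i`), hence `N(p, e_i) ≥ n + 1` after
the switch; moreover every `e_i` beats `p` by at most `n` after the switch, so
`p`'s Maximin score remains `n + 1`, every `e_i` has Maximin score at most `n`,
and `p` remains the unique Maximin winner. -/
theorem stmt_19 (m n k : ℕ) (hn : 1 ≤ n)
    (inc : Fin m → Fin n → Bool)
    (hedge : ∀ e : Fin m, ((List.finRange n).filter (fun v => inc e v)).length = 2)
    (S : Finset (Fin n)) (hcard : S.card = k)
    (hind : ∀ e : Fin m, (S.filter (fun v => inc e v)).card ≤ 1) :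
    (∀ e : Fin m, (S.filter (fun v => inc e v)).card ≤ 1) ∧
    (∀ e : Fin m, n + 1 ≤ pairN (profileSwitched m n inc S) (pC m) (Sum.inl e)) ∧
    (∀ e : Fin m, pairN (profileSwitched m n inc S) (Sum.inl e) (pC m) ≤ n) ∧
    maximin (profileSwitched m n inc S) (pC m) = ((n + 1 : ℕ) : ℕ∞) ∧
    (∀ e : Fin m, maximin (profileSwitched m n inc S) (Sum.inl e) ≤ (n : ℕ∞)) ∧
    (∀ c : Cand m, c ≠ pC m →
      maximin (profileSwitched m n inc S) c <
        maximin (profileSwitched m n inc S) (pC m)) :=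
  stmt_19_general m n inc hedge S hind

end Stmt19
end
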